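/- Let D ⊆ ℝ² be open and let A, B, θ, ρ : D → ℝ be smooth. For each real λ ≠ 0 define the matrix-valued functions U^λ = -(∂ᵤθ/2)·e₃ + λ·((ρ-1)/2)·A·ξ₁(θ) and V^λ = (∂ᵥθ/2)·e₃ - λ⁻¹·((ρ+1)/2)·B·ξ₂(θ) on D. Then the zero-curvature equation ∂ᵤV^λ - ∂ᵥU^λ + U^λ·V^λ - V^λ·U^λ = 0 holds on D for every real λ ≠ 0 if and only if it holds for λ = 1 and, in addition, ∂ᵥ((ρ-1)·A) = 0 and ∂ᵤ((ρ+1)·B) = 0 identically on D. -/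

import Mathlib

open Matrix

attribute [local instance] Matrix.frobeniusNormedAddCommGroup Matrix.frobeniusNormedSpace

noncomputable section

/-- Basis of su(2). -/
def e1 : Matrix (Fin 2) (Fin 2) ℂ := !![0, 1; -1, 0]
def e2 : Matrix (Fin 2) (Fin 2) ℂ := !![0, Complex.I; Complex.I, 0]
def e3 : Matrix (Fin 2) (Fin 2) ℂ := !![Complex.I, 0; 0, -Complex.I]

def xi1 (θ : ℝ) : Matrix (Fin 2) (Fin 2) ℂ := Real.cos θ • e1 - Real.sin θ • e2
def xi2 (θ : ℝ) : Matrix (Fin 2) (Fin 2) ℂ := Real.cos θ • e1 + Real.sin θ • e2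

/-- Partial derivative in the `u` direction. -/
def pu {E : Type*} [NormedAddCommGroup E] [NormedSpace ℝ E]
    (f : ℝ × ℝ → E) (p : ℝ × ℝ) : E := fderiv ℝ f p (1, 0)

/-- Partial derivative in the `v` direction. -/
def pv {E : Type*} [NormedAddCommGroup E] [NormedSpace ℝ E]
    (f : ℝ × ℝ → E) (p : ℝ × ℝ) : E := fderiv ℝ f p (0, 1)

/-- The normal Gauss map `ν = F·e₃·F⁻¹`. -/
def nu (F : ℝ × ℝ → Matrix (Fin 2) (Fin 2) ℂ) (p : ℝ × ℝ) : Matrix (Fin 2) (Fin 2) ℂ :=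
  F p * e3 * (F p)⁻¹

/-- `U^λ = -(∂ᵤθ/2)·e₃ + λ·((ρ-1)/2)·A·ξ₁(θ)`. -/
def Umat (A θ ρ : ℝ × ℝ → ℝ) (l : ℝ) (p : ℝ × ℝ) : Matrix (Fin 2) (Fin 2) ℂ :=
  (-(pu θ p) / 2) • e3 + (l * ((ρ p - 1) / 2) * A p) • xi1 (θ p)

/-- `V^λ = (∂ᵥθ/2)·e₃ - λ⁻¹·((ρ+1)/2)·B·ξ₂(θ)`. -/
def Vmat (B θ ρ : ℝ × ℝ → ℝ) (l : ℝ) (p : ℝ × ℝ) : Matrix (Fin 2) (Fin 2) ℂ :=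
  (pv θ p / 2) • e3 - (l⁻¹ * ((ρ p + 1) / 2) * B p) • xi2 (θ p)

/- ### Auxiliary lemmas -/

section Aux

set_option linter.unnecessarySeqFocus false

lemma bracket2 (t : ℝ) : e3 * xi2 t - xi2 t * e3
    = (2 * Real.cos t) • e2 - (2 * Real.sin t) • e1 := by
  ext i j
  fin_cases i <;> fin_cases j <;>
    simp [xi2, e1, e2, e3, Matrix.mul_apply, Fin.sum_univ_two] <;>
      ring_nf <;> simp [Complex.I_sq] <;> ring

lemma bracket1 (t : ℝ) : e3 * xi1 t - xi1 t * e3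
    = (2 * Real.cos t) • e2 + (2 * Real.sin t) • e1 := by
  ext i j
  fin_cases i <;> fin_cases j <;>
    simp [xi1, e1, e2, e3, Matrix.mul_apply, Fin.sum_univ_two] <;>
      ring_nf <;> simp [Complex.I_sq] <;> ring

lemma diffAt_xi2 {θf : ℝ × ℝ → ℝ} {p : ℝ × ℝ} (hθf : DifferentiableAt ℝ θf p) :
    DifferentiableAt ℝ (fun q => xi2 (θf q)) p := by
  simp only [xi2]; exact (hθf.cos.smul_const e1).fun_add (hθf.sin.smul_const e2)

lemma diffAt_xi1 {θf : ℝ × ℝ → ℝ} {p : ℝ × ℝ} (hθf : DifferentiableAt ℝ θf p) :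
    DifferentiableAt ℝ (fun q => xi1 (θf q)) p := by
  simp only [xi1]; exact (hθf.cos.smul_const e1).fun_sub (hθf.sin.smul_const e2)

lemma fderiv_smul_xi2 {h θf : ℝ × ℝ → ℝ} {p : ℝ × ℝ} (w : ℝ × ℝ)
    (hh : DifferentiableAt ℝ h p) (hθf : DifferentiableAt ℝ θf p) :
    fderiv ℝ (fun q => h q • xi2 (θf q)) p w
      = (fderiv ℝ h p w) • xi2 (θf p)
        + (h p * fderiv ℝ θf p w) •
            ((-Real.sin (θf p)) • e1 + Real.cos (θf p) • e2) := by
  have hc : HasFDerivAt (fun q => Real.cos (θf q))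
      ((-Real.sin (θf p)) • fderiv ℝ θf p) p :=
    (Real.hasDerivAt_cos (θf p)).comp_hasFDerivAt p hθf.hasFDerivAt
  have hs : HasFDerivAt (fun q => Real.sin (θf q))
      ((Real.cos (θf p)) • fderiv ℝ θf p) p :=
    (Real.hasDerivAt_sin (θf p)).comp_hasFDerivAt p hθf.hasFDerivAt
  have hX : HasFDerivAt (fun q => xi2 (θf q))
      ((((-Real.sin (θf p)) • fderiv ℝ θf p).smulRight e1)
        + (((Real.cos (θf p)) • fderiv ℝ θf p).smulRight e2)) p := by
    simp only [xi2]; exact (hc.smul_const e1).fun_add (hs.smul_const e2)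
  have key : fderiv ℝ (fun q => h q • xi2 (θf q)) p w
      = h p • ((-Real.sin (θf p) * fderiv ℝ θf p w) • e1 + (Real.cos (θf p) * fderiv ℝ θf p w) • e2)
        + fderiv ℝ h p w • xi2 (θf p) :=
    congrArg (fun L => L w) (hh.hasFDerivAt.fun_smul hX).fderiv
  rw [key]
  simp [xi2, smul_smul, smul_add]
  module

lemma fderiv_smul_xi1 {h θf : ℝ × ℝ → ℝ} {p : ℝ × ℝ} (w : ℝ × ℝ)
    (hh : DifferentiableAt ℝ h p) (hθf : DifferentiableAt ℝ θf p) :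
    fderiv ℝ (fun q => h q • xi1 (θf q)) p w
      = (fderiv ℝ h p w) • xi1 (θf p)
        + (h p * fderiv ℝ θf p w) •
            ((-Real.sin (θf p)) • e1 - Real.cos (θf p) • e2) := by
  have hc : HasFDerivAt (fun q => Real.cos (θf q))
      ((-Real.sin (θf p)) • fderiv ℝ θf p) p :=
    (Real.hasDerivAt_cos (θf p)).comp_hasFDerivAt p hθf.hasFDerivAt
  have hs : HasFDerivAt (fun q => Real.sin (θf q))
      ((Real.cos (θf p)) • fderiv ℝ θf p) p :=
    (Real.hasDerivAt_sin (θf p)).comp_hasFDerivAt p hθf.hasFDerivAt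
  have hX : HasFDerivAt (fun q => xi1 (θf q))
      ((((-Real.sin (θf p)) • fderiv ℝ θf p).smulRight e1)
        - (((Real.cos (θf p)) • fderiv ℝ θf p).smulRight e2)) p := by
    simp only [xi1]; exact (hc.smul_const e1).fun_sub (hs.smul_const e2)
  have key : fderiv ℝ (fun q => h q • xi1 (θf q)) p w
      = h p • ((-Real.sin (θf p) * fderiv ℝ θf p w) • e1 - (Real.cos (θf p) * fderiv ℝ θf p w) • e2)
        + fderiv ℝ h p w • xi1 (θf p) :=
    congrArg (fun L => L w) (hh.hasFDerivAt.fun_smul hX).fderiv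
  rw [key]
  simp [xi1, smul_smul, smul_sub]
  module

lemma key2 {h θf : ℝ × ℝ → ℝ} {p : ℝ × ℝ} (w : ℝ × ℝ)
    (hh : DifferentiableAt ℝ h p) (hθf : DifferentiableAt ℝ θf p) :
    fderiv ℝ (fun q => h q • xi2 (θf q)) p w
      + (-(fderiv ℝ θf p w) / 2) •
          (e3 * (h p • xi2 (θf p)) - (h p • xi2 (θf p)) * e3)
      = (fderiv ℝ h p w) • xi2 (θf p) := by
  rw [fderiv_smul_xi2 w hh hθf]
  have hb : e3 * (h p • xi2 (θf p)) - (h p • xi2 (θf p)) * e3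
      = h p • (e3 * xi2 (θf p) - xi2 (θf p) * e3) := by
    simp [Matrix.mul_smul, Matrix.smul_mul, smul_sub]
  rw [hb, bracket2]
  match_scalars <;> ring

lemma key1 {h θf : ℝ × ℝ → ℝ} {p : ℝ × ℝ} (w : ℝ × ℝ)
    (hh : DifferentiableAt ℝ h p) (hθf : DifferentiableAt ℝ θf p) :
    fderiv ℝ (fun q => h q • xi1 (θf q)) p w
      + ((fderiv ℝ θf p w) / 2) •
          (e3 * (h p • xi1 (θf p)) - (h p • xi1 (θf p)) * e3)
      = (fderiv ℝ h p w) • xi1 (θf p) := by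
  rw [fderiv_smul_xi1 w hh hθf]
  have hb : e3 * (h p • xi1 (θf p)) - (h p • xi1 (θf p)) * e3
      = h p • (e3 * xi1 (θf p) - xi1 (θf p) * e3) := by
    simp [Matrix.mul_smul, Matrix.smul_mul, smul_sub]
  rw [hb, bracket1]
  simp only [xi1]
  match_scalars <;> ring

lemma assemble (l m cu cv : ℝ) (hlm : l * m = 1)
    (PHv PHu PG PF Y W M1 M2 : Matrix (Fin 2) (Fin 2) ℂ)
    (hM2 : PG + cu • (e3 * W - W * e3) = M2)
    (hM1 : PF + cv • (e3 * Y - Y * e3) = M1) :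
    PHv - m • PG - (PHu + l • PF)
      + (cu • e3 + l • Y) * (cv • e3 - m • W)
      - (cv • e3 - m • W) * (cu • e3 + l • Y)
    = (PHv - PG - (PHu + PF)
      + (cu • e3 + Y) * (cv • e3 - W)
      - (cv • e3 - W) * (cu • e3 + Y))
      + (1 - m) • M2 + (1 - l) • M1 := by
  rw [← hM2, ← hM1]
  simp only [mul_add, add_mul, mul_sub, sub_mul, smul_mul_assoc, mul_smul_comm,
    smul_smul, smul_sub, smul_add]
  match_scalars
  all_goals try ring
  all_goals first | linear_combination hlm | linear_combination (-1 : ℝ) * hlm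

lemma fderiv_half {k : ℝ × ℝ → ℝ} {p : ℝ × ℝ} (w : ℝ × ℝ)
    (hk : DifferentiableAt ℝ k p) :
    fderiv ℝ (fun q => k q / 2) p w = fderiv ℝ k p w / 2 := by
  have h : (fun q => k q / 2) = fun q => (2 : ℝ)⁻¹ • k q := by
    funext q; simp [smul_eq_mul]; ring
  rw [h, fderiv_fun_const_smul hk]
  simp [smul_eq_mul]; ring

end Aux

theorem zero_curvature_all_lambda_iff
    (D : Set (ℝ × ℝ)) (hD : IsOpen D) (A B θ ρ : ℝ × ℝ → ℝ)
    (hA : ContDiffOn ℝ (⊤ : ℕ∞) A D) (hB : ContDiffOn ℝ (⊤ : ℕ∞) B D)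
    (hθ : ContDiffOn ℝ (⊤ : ℕ∞) θ D) (hρ : ContDiffOn ℝ (⊤ : ℕ∞) ρ D) :
    (∀ l : ℝ, l ≠ 0 → ∀ p ∈ D,
        pu (Vmat B θ ρ l) p - pv (Umat A θ ρ l) p
          + Umat A θ ρ l p * Vmat B θ ρ l p - Vmat B θ ρ l p * Umat A θ ρ l p = 0) ↔
      ((∀ p ∈ D,
        pu (Vmat B θ ρ 1) p - pv (Umat A θ ρ 1) p
          + Umat A θ ρ 1 p * Vmat B θ ρ 1 p - Vmat B θ ρ 1 p * Umat A θ ρ 1 p = 0)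
      ∧ (∀ p ∈ D, pv (fun q => (ρ q - 1) * A q) p = 0)
      ∧ (∀ p ∈ D, pu (fun q => (ρ q + 1) * B q) p = 0)) := by
  -- the master identity
  have main : ∀ p ∈ D, ∀ l : ℝ, l ≠ 0 →
      pu (Vmat B θ ρ l) p - pv (Umat A θ ρ l) p
          + Umat A θ ρ l p * Vmat B θ ρ l p - Vmat B θ ρ l p * Umat A θ ρ l p
        = (pu (Vmat B θ ρ 1) p - pv (Umat A θ ρ 1) p
          + Umat A θ ρ 1 p * Vmat B θ ρ 1 p - Vmat B θ ρ 1 p * Umat A θ ρ 1 p)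
          + (1 - l⁻¹) • ((pu (fun q => (ρ q + 1) * B q) p / 2) • xi2 (θ p))
          + (1 - l) • ((pv (fun q => (ρ q - 1) * A q) p / 2) • xi1 (θ p)) := by
    intro p hp l hl
    have hmem : D ∈ nhds p := hD.mem_nhds hp
    have hθs : ContDiffAt ℝ (⊤ : ℕ∞) θ p := hθ.contDiffAt hmem
    have hθd : DifferentiableAt ℝ θ p := hθs.differentiableAt (by simp)
    have hAd : DifferentiableAt ℝ A p := (hA.contDiffAt hmem).differentiableAt (by simp)
    have hBd : DifferentiableAt ℝ B p := (hB.contDiffAt hmem).differentiableAt (by simp)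
    have hρd : DifferentiableAt ℝ ρ p := (hρ.contDiffAt hmem).differentiableAt (by simp)
    have hfund : DifferentiableAt ℝ (fderiv ℝ θ) p :=
      (hθs.fderiv_right (m := 1) (by exact WithTop.coe_le_coe.mpr (le_top : ((1 + 1 : ℕ) : ℕ∞) ≤ ⊤))).differentiableAt one_ne_zero
    have hpuθd : DifferentiableAt ℝ (fun q => fderiv ℝ θ q (1, 0)) p :=
      hfund.clm_apply (differentiableAt_const _)
    have hpvθd : DifferentiableAt ℝ (fun q => fderiv ℝ θ q (0, 1)) p :=
      hfund.clm_apply (differentiableAt_const _)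
    -- coefficient functions
    set ff : ℝ × ℝ → ℝ := fun q => ((ρ q - 1) * A q) / 2 with hff
    set gg : ℝ × ℝ → ℝ := fun q => ((ρ q + 1) * B q) / 2 with hgg
    have hffd : DifferentiableAt ℝ ff p := by
      rw [hff]; exact ((hρd.sub_const (1:ℝ)).mul hAd).mul_const (2:ℝ)⁻¹
    have hggd : DifferentiableAt ℝ gg p := by
      rw [hgg]; exact ((hρd.add_const (1:ℝ)).mul hBd).mul_const (2:ℝ)⁻¹
    set F : ℝ × ℝ → Matrix (Fin 2) (Fin 2) ℂ := fun q => ff q • xi1 (θ q) with hF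
    set G : ℝ × ℝ → Matrix (Fin 2) (Fin 2) ℂ := fun q => gg q • xi2 (θ q) with hG
    have hFd : DifferentiableAt ℝ F p := by
      rw [hF]; exact hffd.smul (diffAt_xi1 hθd)
    have hGd : DifferentiableAt ℝ G p := by
      rw [hG]; exact hggd.smul (diffAt_xi2 hθd)
    set Hu : ℝ × ℝ → Matrix (Fin 2) (Fin 2) ℂ :=
      fun q => (-(fderiv ℝ θ q (1, 0)) / 2) • e3 with hHu
    set Hv : ℝ × ℝ → Matrix (Fin 2) (Fin 2) ℂ :=
      fun q => (fderiv ℝ θ q (0, 1) / 2) • e3 with hHv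
    have hHud : DifferentiableAt ℝ Hu p := by
      rw [hHu]; exact ((hpuθd.neg.mul_const (2:ℝ)⁻¹).smul_const e3)
    have hHvd : DifferentiableAt ℝ Hv p := by
      rw [hHv]; exact ((hpvθd.mul_const (2:ℝ)⁻¹).smul_const e3)
    -- decompositions of U and V
    have hUl : ∀ l' : ℝ, Umat A θ ρ l' = fun q => Hu q + l' • F q := by
      intro l'; funext q
      show (-(pu θ q) / 2) • e3 + (l' * ((ρ q - 1) / 2) * A q) • xi1 (θ q) = _
      rw [hHu, hF, hff]
      simp only [pu, smul_smul]
      congr 2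
      ring
    have hVl : ∀ l' : ℝ, Vmat B θ ρ l' = fun q => Hv q - l'⁻¹ • G q := by
      intro l'; funext q
      show (pv θ q / 2) • e3 - (l'⁻¹ * ((ρ q + 1) / 2) * B q) • xi2 (θ q) = _
      rw [hHv, hG, hgg]
      simp only [pv, smul_smul]
      congr 2
      ring
    -- derivative splittings
    have hpuV : ∀ l' : ℝ, pu (Vmat B θ ρ l') p
        = fderiv ℝ Hv p (1, 0) - l'⁻¹ • fderiv ℝ G p (1, 0) := by
      intro l'
      rw [hVl l']
      show fderiv ℝ (fun q => Hv q - l'⁻¹ • G q) p (1, 0) = _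
      erw [fderiv_fun_sub hHvd (hGd.fun_const_smul _), fderiv_fun_const_smul hGd]
      rfl
    have hpvU : ∀ l' : ℝ, pv (Umat A θ ρ l') p
        = fderiv ℝ Hu p (0, 1) + l' • fderiv ℝ F p (0, 1) := by
      intro l'
      rw [hUl l']
      show fderiv ℝ (fun q => Hu q + l' • F q) p (0, 1) = _
      erw [fderiv_fun_add hHud (hFd.fun_const_smul _), fderiv_fun_const_smul hFd]
      rfl
    -- values at p
    have hUval : ∀ l' : ℝ, Umat A θ ρ l' p
        = (-(fderiv ℝ θ p (1, 0)) / 2) • e3 + l' • F p := by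
      intro l'; rw [hUl l']
    have hVval : ∀ l' : ℝ, Vmat B θ ρ l' p
        = (fderiv ℝ θ p (0, 1) / 2) • e3 - l'⁻¹ • G p := by
      intro l'; rw [hVl l']
    -- the two key identities
    have hM2 : fderiv ℝ G p (1, 0)
        + (-(fderiv ℝ θ p (1, 0)) / 2) • (e3 * G p - G p * e3)
        = (pu (fun q => (ρ q + 1) * B q) p / 2) • xi2 (θ p) := by
      have := key2 (h := gg) (θf := θ) (p := p) (1, 0) hggd hθd
      rw [hG]
      refine this.trans ?_
      congr 1
      rw [hgg]
      rw [fderiv_half (1, 0) ((hρd.add_const 1).fun_mul hBd)]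
      rfl
    have hM1 : fderiv ℝ F p (0, 1)
        + (fderiv ℝ θ p (0, 1) / 2) • (e3 * F p - F p * e3)
        = (pv (fun q => (ρ q - 1) * A q) p / 2) • xi1 (θ p) := by
      have := key1 (h := ff) (θf := θ) (p := p) (0, 1) hffd hθd
      rw [hF]
      refine this.trans ?_
      congr 1
      rw [hff]
      rw [fderiv_half (0, 1) ((hρd.sub_const 1).fun_mul hAd)]
      rfl
    -- assemble
    rw [hpuV l, hpuV 1, hpvU l, hpvU 1, hUval l, hUval 1, hVval l, hVval 1]
    simp only [inv_one, one_smul]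
    exact assemble l l⁻¹ (-(fderiv ℝ θ p (1, 0)) / 2) (fderiv ℝ θ p (0, 1) / 2)
      (mul_inv_cancel₀ hl) _ _ _ _ (F p) (G p) _ _ hM2 hM1
  constructor
  · intro h
    have h1 := fun p hp => h 1 one_ne_zero p hp
    refine ⟨h1, ?_, ?_⟩
    · intro p hp
      have e2' := h 2 two_ne_zero p hp
      have eh := h (1/2) (by norm_num) p hp
      rw [main p hp 2 two_ne_zero] at e2'
      rw [main p hp (1/2) (by norm_num)] at eh
      rw [h1 p hp] at e2' eh
      norm_num at e2' eh
      have hM1 : (pv (fun q => (ρ q - 1) * A q) p / 2) • xi1 (θ p) = 0 := by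
        linear_combination (norm := module) (-4/3 : ℝ) • e2' + (-2/3 : ℝ) • eh
      have h01 := congrFun (congrFun hM1 0) 1
      simp [xi1, e1, e2, Matrix.smul_apply, Complex.real_smul] at h01
      rcases h01 with h01 | h01
      · linarith
      · exfalso
        have hre := congrArg Complex.re h01
        have him := congrArg Complex.im h01
        simp [Complex.cos_ofReal_re, Complex.sin_ofReal_re] at hre him
        nlinarith [Real.sin_sq_add_cos_sq (θ p)]
    · intro p hp
      have e2' := h 2 two_ne_zero p hp
      have eh := h (1/2) (by norm_num) p hp
      rw [main p hp 2 two_ne_zero] at e2'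
      rw [main p hp (1/2) (by norm_num)] at eh
      rw [h1 p hp] at e2' eh
      norm_num at e2' eh
      have hM2 : (pu (fun q => (ρ q + 1) * B q) p / 2) • xi2 (θ p) = 0 := by
        linear_combination (norm := module) (-2/3 : ℝ) • e2' + (-4/3 : ℝ) • eh
      have h01 := congrFun (congrFun hM2 0) 1
      simp [xi2, e1, e2, Matrix.smul_apply, Complex.real_smul] at h01
      have h02 : (↑(pu (fun q => (ρ q + 1) * B q) p) / 2 : ℂ)
          * (Complex.cos ↑(θ p) + Complex.sin ↑(θ p) * Complex.I) = 0 := by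
        rw [mul_add]; exact h01
      rcases mul_eq_zero.mp h02 with h02 | h02
      · have : ((pu (fun q => (ρ q + 1) * B q) p : ℝ) : ℂ) = 0 := by
          field_simp at h02; simpa using h02
        exact_mod_cast this
      · exfalso
        have hre := congrArg Complex.re h02
        have him := congrArg Complex.im h02
        simp [Complex.cos_ofReal_re, Complex.sin_ofReal_re] at hre him
        nlinarith [Real.sin_sq_add_cos_sq (θ p)]
  · rintro ⟨h1, hP, hQ⟩ l hl p hp
    rw [main p hp l hl, h1 p hp, hP p hp, hQ p hp]
    simp
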